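/- Let X be a graph as in the context, fix a vertex x₀, and let m be an integer greater than 2. Then N_m(x₀) = c_m(x₀) − (deg(x₀)−2)·Σ_{i=1}^{⌈m/2⌉−1} c_{m−2i}(x₀) + Σ_{i=1}^{⌈m/2⌉−1} i·(Δ_X c_{m−2i})(x₀), where ⌈·⌉ denotes the ceiling function. -/

import Mathlib

/-!
A tailed geodesic loop of length `n + 3` at `x` is `e q ē`, where `e ∈ E_x` and `q` is a geodesic
loop of length `n + 1` at `t e` that neither starts with `ē` nor ends with `e`. Without these two
conditions, the pairs `(e, q)` number
`Σ_{e ∈ E_x} c_{n+1}(t e) = deg(x) c_{n+1}(x) - (Δ c_{n+1})(x)`.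
Those where `q` starts with `ē` but does not end with `e` are rotations of the closed geodesics at
`x`; those where `q` ends with `e` but does not start with `ē` are their reversals; those where it
does both are `q = ē ℓ e` with `ℓ` a geodesic loop of length `n - 1` at `x` and `e ≠ ℓ₀, ℓ̄ₙ₋₂`,
so for `n ≥ 2` they number `(deg(x) - 2) c_{n-1}(x) + T_{n-1}(x)`, where `T` counts tailed
geodesic loops (and there are none for `n < 2`). With `c = N + T` this is a second-order linear
recurrence for `T`, which the stated sums solve.
-/

/-- A graph in the sense of Serre: an edge set with origin/terminus maps and a
fixed-point-free involution `bar` satisfying `o e = t (bar e)`.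
Loops and multiple edges are allowed. -/
structure SerreGraph where
  V : Type
  E : Type
  o : E → V
  t : E → V
  bar : E → E
  bar_ne : ∀ e, bar e ≠ e
  bar_bar : ∀ e, bar (bar e) = e
  o_bar : ∀ e, o e = t (bar e)

namespace SerreGraph

variable (X : SerreGraph)

/-- The set of edges emanating from `x`. -/
def edgesAt (x : X.V) : Set X.E := {e | X.o e = x}

/-- The degree of a vertex. -/
noncomputable def deg (x : X.V) : ℕ := Nat.card (X.edgesAt x)

/-- A sequence of `m` edges is a path when consecutive edges are composable. -/
def IsPath {m : ℕ} (p : Fin m → X.E) : Prop :=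
  ∀ (i : ℕ) (h : i + 1 < m), X.t (p ⟨i, by omega⟩) = X.o (p ⟨i + 1, h⟩)

/-- No backtracking: no edge is followed by its reversal. -/
def NoBacktrack {m : ℕ} (p : Fin m → X.E) : Prop :=
  ∀ (i : ℕ) (h : i + 1 < m), p ⟨i + 1, h⟩ ≠ X.bar (p ⟨i, by omega⟩)

/-- A geodesic loop at `x`: a closed path starting and ending at `x` with no
backtracking. -/
def IsGeodesicLoopAt {m : ℕ} (x : X.V) (p : Fin m → X.E) : Prop :=
  X.IsPath p ∧ X.NoBacktrack p ∧
    ∀ (h : 0 < m), X.o (p ⟨0, h⟩) = x ∧ X.t (p ⟨m - 1, by omega⟩) = x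

/-- A path has a tail when its last edge is the reversal of its first edge. -/
def HasTail {m : ℕ} (p : Fin m → X.E) : Prop :=
  ∃ (h : 0 < m), p ⟨m - 1, by omega⟩ = X.bar (p ⟨0, h⟩)

/-- `c m x` is the number of geodesic loops of length `m` starting at `x`. -/
noncomputable def c (m : ℕ) (x : X.V) : ℕ :=
  Nat.card {p : Fin m → X.E // X.IsGeodesicLoopAt x p}

/-- `N m x` is the number of closed geodesics of length `m` starting at `x`,
i.e. geodesic loops with no tail. -/
noncomputable def N (m : ℕ) (x : X.V) : ℕ :=
  Nat.card {p : Fin m → X.E // X.IsGeodesicLoopAt x p ∧ ¬ X.HasTail p}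

/-- The formal combinatorial Laplacian applied to a function on vertices:
`(Δ f)(x) = deg(x)·f(x) − Σ_{e ∈ E_x} f(t(e))`. -/
noncomputable def lap (f : X.V → ℤ) (x : X.V) : ℤ :=
  (X.deg x : ℤ) * f x - ∑ᶠ e ∈ X.edgesAt x, f (X.t e)

/-- Connectedness: any two vertices are joined by a path. -/
def Connected : Prop :=
  ∀ x y : X.V, x = y ∨ ∃ (m : ℕ) (p : Fin m → X.E) (h : 0 < m),
    X.IsPath p ∧ X.o (p ⟨0, h⟩) = x ∧ X.t (p ⟨m - 1, by omega⟩) = y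

end SerreGraph

theorem Nat.card_subtype_eq_card_and_add_card_and_not {α : Type*} (R P : α → Prop)
    [Finite {a // R a}] :
    Nat.card {a // R a} = Nat.card {a // R a ∧ P a} + Nat.card {a // R a ∧ ¬P a} := by
  classical
  rw [← Nat.card_congr (Equiv.sumCompl fun a : {a // R a} => P a), Nat.card_sum,
    Nat.card_congr (Equiv.subtypeSubtypeEquivSubtypeInter R P),
    Nat.card_congr (Equiv.subtypeSubtypeEquivSubtypeInter R fun a => ¬P a)]

theorem Nat.card_subtype_eq_four_cases {α : Type*} (R P Q : α → Prop) [Finite {a // R a}] :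
    Nat.card {a // R a} = Nat.card {a // R a ∧ P a ∧ Q a} + Nat.card {a // R a ∧ P a ∧ ¬Q a} +
      Nat.card {a // R a ∧ ¬P a ∧ Q a} + Nat.card {a // R a ∧ ¬P a ∧ ¬Q a} := by
  have := Finite.of_equiv _ (Equiv.subtypeSubtypeEquivSubtypeInter R P)
  have := Finite.of_equiv _ (Equiv.subtypeSubtypeEquivSubtypeInter R fun a => ¬P a)
  simp only [← and_assoc]
  rw [Nat.card_subtype_eq_card_and_add_card_and_not R P,
    Nat.card_subtype_eq_card_and_add_card_and_not (fun a => R a ∧ P a) Q,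
    Nat.card_subtype_eq_card_and_add_card_and_not (fun a => R a ∧ ¬P a) Q]
  omega

theorem Nat.card_subtype_eq_of_graph {α β : Type*} {A : β × α → Prop} {R : α → Prop}
    (g : α → β) (h : ∀ w, A w ↔ R w.2 ∧ w.1 = g w.2) :
    Nat.card {w // A w} = Nat.card {a // R a} :=
  Nat.card_congr
    { toFun := fun w => ⟨w.1.2, ((h _).1 w.2).1⟩
      invFun := fun a => ⟨(g a, a), (h _).2 ⟨a.2, rfl⟩⟩
      left_inv := fun w => Subtype.ext (Prod.ext ((h _).1 w.2).2.symm rfl)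
      right_inv := fun _ => rfl }

theorem Fin.cons_snoc_init_tail {α : Type*} {n : ℕ} (p : Fin (n + 2) → α) :
    Fin.cons (p 0) (Fin.snoc (Fin.init (Fin.tail p)) (p (Fin.last _))) = p := by
  rw [show p (Fin.last _) = Fin.tail p (Fin.last n) from rfl, Fin.snoc_init_self,
    Fin.cons_self_tail]

theorem sum_Icc_half_add_two (f : ℕ → ℕ → ℤ) {m : ℕ} (hm : 0 < m) :
    ∑ i ∈ Finset.Icc 1 ((m + 2 + 1) / 2 - 1), f i (m + 2 - 2 * i) =
      f 1 m + ∑ i ∈ Finset.Icc 1 ((m + 1) / 2 - 1), f (i + 1) (m - 2 * i) := by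
  rw [show (m + 2 + 1) / 2 - 1 = (m + 1) / 2 - 1 + 1 by omega,
    ← Finset.insert_Icc_add_one_left_eq_Icc (by omega), Finset.sum_insert (by simp),
    ← Finset.map_add_right_Icc, Finset.sum_map]
  congr 1
  refine Finset.sum_congr rfl fun i _ => ?_
  simp only [addRightEmbedding_apply]
  congr 1
  omega

theorem eq_sum_Icc_of_recurrence {T C L : ℕ → ℤ} {d : ℤ} (h1 : T 1 = 0) (h2 : T 2 = 0)
    (h3 : T 3 = d * C 1 - L 1) (h4 : T 4 = d * C 2 - L 2)
    (hrec : ∀ k,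
      T (k + 5) = d * C (k + 3) - L (k + 3) + 2 * T (k + 3) - (d * C (k + 1) + T (k + 1)))
    {m : ℕ} (hm : 0 < m) :
    T m = d * ∑ i ∈ Finset.Icc 1 ((m + 1) / 2 - 1), C (m - 2 * i) -
      ∑ i ∈ Finset.Icc 1 ((m + 1) / 2 - 1), (i : ℤ) * L (m - 2 * i) := by
  induction m using Nat.strong_induction_on with
  | _ m ih =>
  match m, hm with
  | 1, _ => simp [h1]
  | 2, _ => simp [h2]
  | 3, _ => simp [h3]
  | 4, _ => simp [h4]
  | k + 5, _ =>
    have hC (n : ℕ) (hn : 0 < n) := sum_Icc_half_add_two (fun _ n => C n) hn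
    have hL (n : ℕ) (hn : 0 < n) := sum_Icc_half_add_two (fun i n => (i : ℤ) * L n) hn
    have hG (n : ℕ) (hn : 0 < n) := sum_Icc_half_add_two (fun _ n => L n) hn
    simp only [Nat.cast_add, Nat.cast_one, add_mul, one_mul, Finset.sum_add_distrib] at hL
    rw [hrec, ih (k + 3) (by omega) (by omega), ih (k + 1) (by omega) (by omega)]
    linear_combination -d * hC (k + 3) (by omega) + hL (k + 3) (by omega) +
      d * hC (k + 1) (by omega) - hL (k + 1) (by omega) + hG (k + 1) (by omega)

namespace SerreGraph

variable {X : SerreGraph}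

theorem bar_injective : Function.Injective X.bar :=
  Function.LeftInverse.injective X.bar_bar

theorem t_bar (e : X.E) : X.t (X.bar e) = X.o e := (X.o_bar e).symm

theorem o_bar_eq_t (e : X.E) : X.o (X.bar e) = X.t e := by
  rw [X.o_bar, X.bar_bar]

theorem eq_bar_comm {e f : X.E} : e = X.bar f ↔ f = X.bar e := by
  constructor <;> rintro rfl <;> exact (X.bar_bar _).symm

theorem bar_eq_iff_eq_bar {e f : X.E} : X.bar e = f ↔ e = X.bar f := by
  rw [eq_comm, eq_bar_comm]

/-- `f` may follow `e` in a path without backtracking (Hashimoto's edge adjacency). -/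
def NBAdj (e f : X.E) : Prop := X.t e = X.o f ∧ f ≠ X.bar e

theorem NBAdj.bar {e f : X.E} (h : X.NBAdj e f) : X.NBAdj (X.bar f) (X.bar e) := by
  refine ⟨by rw [t_bar, o_bar_eq_t, h.1], fun hb => h.2 ?_⟩
  rw [hb, X.bar_bar]

def IsGeodesic {n : ℕ} (p : Fin (n + 1) → X.E) : Prop :=
  ∀ i : Fin n, X.NBAdj (p i.castSucc) (p i.succ)

theorem isGeodesicLoopAt_iff {n : ℕ} {x : X.V} {p : Fin (n + 1) → X.E} :
    X.IsGeodesicLoopAt x p ↔ X.IsGeodesic p ∧ X.o (p 0) = x ∧ X.t (p (Fin.last n)) = x :=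
  ⟨fun ⟨hp, hb, hx⟩ =>
      ⟨fun i => ⟨hp i (Nat.succ_lt_succ i.2), hb i (Nat.succ_lt_succ i.2)⟩, hx n.succ_pos⟩,
    fun ⟨hg, hx⟩ => ⟨fun i hi => (hg ⟨i, by omega⟩).1, fun i hi => (hg ⟨i, by omega⟩).2,
      fun _ => hx⟩⟩

theorem hasTail_iff {n : ℕ} {p : Fin (n + 1) → X.E} :
    X.HasTail p ↔ p (Fin.last n) = X.bar (p 0) :=
  ⟨fun ⟨_, h⟩ => h, fun h => ⟨n.succ_pos, h⟩⟩

theorem isGeodesic_cons_iff {n : ℕ} (e : X.E) (p : Fin (n + 1) → X.E) :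
    X.IsGeodesic (Fin.cons e p : Fin (n + 2) → X.E) ↔ X.NBAdj e (p 0) ∧ X.IsGeodesic p := by
  simp only [IsGeodesic, Fin.forall_fin_succ, Fin.castSucc_zero, Fin.cons_zero, Fin.cons_succ]
  rfl

theorem isGeodesic_snoc_iff {n : ℕ} (p : Fin (n + 1) → X.E) (f : X.E) :
    X.IsGeodesic (Fin.snoc p f : Fin (n + 2) → X.E) ↔
      X.IsGeodesic p ∧ X.NBAdj (p (Fin.last n)) f := by
  simp only [IsGeodesic, Fin.forall_fin_succ', Fin.snoc_castSucc, Fin.succ_last, Fin.snoc_last,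
    Fin.succ_castSucc]

theorem isGeodesicLoopAt_cons_snoc_iff {n : ℕ} {y : X.V} (e f : X.E) (q : Fin (n + 1) → X.E) :
    X.IsGeodesicLoopAt y (Fin.cons e (Fin.snoc q f) : Fin (n + 3) → X.E) ↔
      X.o e = y ∧ X.NBAdj e (q 0) ∧ X.IsGeodesic q ∧ X.NBAdj (q (Fin.last n)) f ∧ X.t f = y := by
  rw [isGeodesicLoopAt_iff, isGeodesic_cons_iff, isGeodesic_snoc_iff, Fin.cons_snoc_eq_snoc_cons]
  simp only [Fin.snoc_last]
  rw [show (Fin.snoc q f : Fin (n + 2) → X.E) 0 = q 0 from Fin.snoc_castSucc (i := 0) ..]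
  tauto

def reverse {k : ℕ} (q : Fin k → X.E) : Fin k → X.E := fun i => X.bar (q i.rev)

theorem reverse_involutive (k : ℕ) : Function.Involutive (X.reverse (k := k)) := by
  intro q
  funext i
  simp [reverse, X.bar_bar]

theorem IsGeodesic.reverse {n : ℕ} {q : Fin (n + 1) → X.E} (h : X.IsGeodesic q) :
    X.IsGeodesic (X.reverse q) := by
  intro i
  simp only [SerreGraph.reverse, Fin.rev_castSucc, Fin.rev_succ]
  exact (h i.rev).bar

theorem isGeodesicLoopAt_reverse_iff {n : ℕ} {y : X.V} {q : Fin (n + 1) → X.E} :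
    X.IsGeodesicLoopAt y (X.reverse q) ↔ X.IsGeodesicLoopAt y q := by
  suffices ∀ q : Fin (n + 1) → X.E, X.IsGeodesicLoopAt y q → X.IsGeodesicLoopAt y (X.reverse q) from
    ⟨fun h => X.reverse_involutive _ q ▸ this _ h, this q⟩
  intro q
  simp only [isGeodesicLoopAt_iff, SerreGraph.reverse, Fin.rev_zero, Fin.rev_last, t_bar,
    o_bar_eq_t]
  exact fun ⟨hq, h0, hl⟩ => ⟨hq.reverse, hl, h0⟩

theorem reverse_zero {n : ℕ} (q : Fin (n + 1) → X.E) : X.reverse q 0 = X.bar (q (Fin.last n)) := by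
  simp [SerreGraph.reverse]

theorem reverse_last {n : ℕ} (q : Fin (n + 1) → X.E) : X.reverse q (Fin.last n) = X.bar (q 0) := by
  simp [SerreGraph.reverse]

def IsCyclicGeodesic {k : ℕ} (p : Fin k → X.E) : Prop :=
  ∀ i, X.NBAdj (p i) (p (finRotate k i))

theorem isCyclicGeodesic_iff {n : ℕ} {p : Fin (n + 1) → X.E} :
    X.IsCyclicGeodesic p ↔ X.IsGeodesic p ∧ X.NBAdj (p (Fin.last n)) (p 0) := by
  simp only [IsCyclicGeodesic, Fin.forall_fin_succ', finRotate_apply, Fin.coeSucc_eq_succ,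
    Fin.last_add_one]
  rfl

theorem isCyclicGeodesic_comp_finRotate_iff {k : ℕ} {p : Fin k → X.E} :
    X.IsCyclicGeodesic (p ∘ finRotate k) ↔ X.IsCyclicGeodesic p :=
  (finRotate k).forall_congr fun _ => Iff.rfl

theorem isGeodesicLoopAt_and_not_hasTail_iff {n : ℕ} {x : X.V} {p : Fin (n + 1) → X.E} :
    X.IsGeodesicLoopAt x p ∧ ¬X.HasTail p ↔ X.IsCyclicGeodesic p ∧ X.o (p 0) = x := by
  rw [isGeodesicLoopAt_iff, hasTail_iff, isCyclicGeodesic_iff, NBAdj, X.eq_bar_comm]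
  constructor
  · rintro ⟨⟨hp, h0, hl⟩, ht⟩
    exact ⟨⟨hp, hl.trans h0.symm, ht⟩, h0⟩
  · rintro ⟨⟨hp, hl, ht⟩, h0⟩
    exact ⟨⟨hp, h0, hl.trans h0⟩, ht⟩

theorem isGeodesicLoopAt_cons_snoc_bar_iff {n : ℕ} {x : X.V} (e : X.E) (q : Fin (n + 1) → X.E) :
    X.IsGeodesicLoopAt x (Fin.cons e (Fin.snoc q (X.bar e)) : Fin (n + 3) → X.E) ↔
      (X.o e = x ∧ X.IsGeodesicLoopAt (X.t e) q) ∧ q 0 ≠ X.bar e ∧ q (Fin.last n) ≠ e := by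
  rw [isGeodesicLoopAt_cons_snoc_iff, isGeodesicLoopAt_iff, NBAdj, NBAdj, o_bar_eq_t, t_bar,
    X.bar_injective.ne_iff, ne_comm (a := e)]
  grind

theorem isGeodesicLoopAt_cons_bar_snoc_iff {n : ℕ} (e : X.E) (q : Fin (n + 1) → X.E) :
    X.IsGeodesicLoopAt (X.t e) (Fin.cons (X.bar e) (Fin.snoc q e) : Fin (n + 3) → X.E) ↔
      X.IsGeodesicLoopAt (X.o e) q ∧ e ≠ q 0 ∧ e ≠ X.bar (q (Fin.last n)) := by
  rw [isGeodesicLoopAt_cons_snoc_iff, isGeodesicLoopAt_iff, NBAdj, NBAdj, o_bar_eq_t, t_bar,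
    X.bar_bar]
  grind

noncomputable def T (m : ℕ) (x : X.V) : ℕ :=
  Nat.card {p : Fin m → X.E // X.IsGeodesicLoopAt x p ∧ X.HasTail p}

theorem T_one (x : X.V) : X.T 1 x = 0 := by
  refine Nat.card_eq_zero.2 (Or.inl ⟨fun ⟨p, _, hp⟩ => X.bar_ne (p 0) ?_⟩)
  exact (hasTail_iff.1 hp).symm

theorem T_two (x : X.V) : X.T 2 x = 0 := by
  refine Nat.card_eq_zero.2 (Or.inl ⟨fun ⟨p, hp, ht⟩ => ?_⟩)
  exact ((isGeodesicLoopAt_iff.1 hp).1 0).2 (hasTail_iff.1 ht)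

/-- `(e, q)`: an edge `e` leaving `x` followed by a geodesic loop `q` at its terminus. -/
def IsLasso {k : ℕ} (x : X.V) (z : X.E × (Fin k → X.E)) : Prop :=
  X.o z.1 = x ∧ X.IsGeodesicLoopAt (X.t z.1) z.2

def lassoEquivSigma (k : ℕ) (x : X.V) :
    {z : X.E × (Fin k → X.E) // X.IsLasso x z} ≃
      Σ e : X.edgesAt x, {q : Fin k → X.E // X.IsGeodesicLoopAt (X.t e) q} where
  toFun z := ⟨⟨z.1.1, z.2.1⟩, z.1.2, z.2.2⟩
  invFun s := ⟨(s.1, s.2), s.1.2, s.2.2⟩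

theorem card_lasso_ne_ne (n : ℕ) (x : X.V) :
    Nat.card {z : X.E × (Fin (n + 1) → X.E) //
      X.IsLasso x z ∧ z.2 0 ≠ X.bar z.1 ∧ z.2 (Fin.last n) ≠ z.1} = X.T (n + 3) x := by
  refine Nat.card_congr
    { toFun := fun z => ⟨Fin.cons z.1.1 (Fin.snoc z.1.2 (X.bar z.1.1)), ?_, ?_⟩
      invFun := fun p => ⟨(p.1 0, Fin.init (Fin.tail p.1)), ?_⟩
      left_inv := fun z => ?_
      right_inv := fun p => ?_ }
  · exact (isGeodesicLoopAt_cons_snoc_bar_iff _ _).2 z.2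
  · rw [hasTail_iff, Fin.cons_snoc_eq_snoc_cons, Fin.snoc_last]
    rfl
  · obtain ⟨hp, ht⟩ := p.2
    rw [← Fin.cons_snoc_init_tail p.1, hasTail_iff.1 ht, isGeodesicLoopAt_cons_snoc_bar_iff] at hp
    exact hp
  · simp [Fin.tail_cons, Fin.init_snoc]
  · ext1
    conv_rhs => rw [← Fin.cons_snoc_init_tail p.1, hasTail_iff.1 p.2.2]

theorem isLasso_eq_ne_iff {n : ℕ} {x : X.V} (e : X.E) (q : Fin (n + 1) → X.E) :
    (X.IsLasso x (e, q) ∧ q 0 = X.bar e ∧ q (Fin.last n) ≠ e) ↔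
      (X.IsCyclicGeodesic q ∧ X.t (q 0) = x) ∧ e = X.bar (q 0) := by
  rw [IsLasso, isGeodesicLoopAt_iff, isCyclicGeodesic_iff, NBAdj, X.eq_bar_comm (e := q 0)]
  constructor
  · rintro ⟨⟨rfl, hq, -, hl⟩, rfl, he⟩
    exact ⟨⟨⟨hq, hl.trans (t_bar _), fun h => he (X.eq_bar_comm.2 h)⟩, (o_bar_eq_t _).symm⟩, rfl⟩
  · rintro ⟨⟨⟨hq, hl, h0⟩, hx⟩, rfl⟩
    exact ⟨⟨(o_bar_eq_t _).trans hx, hq, (t_bar _).symm, hl.trans (t_bar _).symm⟩, rfl,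
      fun h => h0 (X.eq_bar_comm.1 h)⟩

theorem card_lasso_eq_ne (n : ℕ) (x : X.V) :
    Nat.card {z : X.E × (Fin (n + 1) → X.E) //
      X.IsLasso x z ∧ z.2 0 = X.bar z.1 ∧ z.2 (Fin.last n) ≠ z.1} = X.N (n + 1) x := by
  let rotate : (Fin (n + 1) → X.E) ≃ (Fin (n + 1) → X.E) :=
    (finRotate (n + 1)).symm.arrowCongr (Equiv.refl X.E)
  calc _ = Nat.card {q : Fin (n + 1) → X.E // X.IsCyclicGeodesic q ∧ X.t (q 0) = x} :=
        Nat.card_subtype_eq_of_graph (fun q => X.bar (q 0)) fun z => isLasso_eq_ne_iff z.1 z.2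
    _ = Nat.card {w : Fin (n + 1) → X.E // X.IsCyclicGeodesic w ∧ X.o (w 0) = x} :=
        Nat.card_congr (rotate.subtypeEquiv fun q => ?_)
    _ = X.N (n + 1) x :=
        Nat.card_congr (Equiv.subtypeEquivRight fun w => isGeodesicLoopAt_and_not_hasTail_iff.symm)
  show _ ↔ X.IsCyclicGeodesic (q ∘ finRotate (n + 1)) ∧ X.o (q (finRotate (n + 1) 0)) = x
  rw [isCyclicGeodesic_comp_finRotate_iff]
  exact and_congr_right fun hq => by rw [(hq 0).1]

theorem card_lasso_ne_eq (n : ℕ) (x : X.V) :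
    Nat.card {z : X.E × (Fin (n + 1) → X.E) //
      X.IsLasso x z ∧ z.2 0 ≠ X.bar z.1 ∧ z.2 (Fin.last n) = z.1} =
    Nat.card {z : X.E × (Fin (n + 1) → X.E) //
      X.IsLasso x z ∧ z.2 0 = X.bar z.1 ∧ z.2 (Fin.last n) ≠ z.1} := by
  refine Nat.card_congr
    (((Equiv.refl X.E).prodCongr (X.reverse_involutive (n + 1)).toPerm).subtypeEquiv fun z => ?_)
  simp only [Equiv.prodCongr_apply, Equiv.coe_refl, Prod.map_fst, Prod.map_snd, id,
    Function.Involutive.coe_toPerm, IsLasso, isGeodesicLoopAt_reverse_iff, reverse_zero,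
    reverse_last, X.bar_injective.eq_iff, ne_eq, bar_eq_iff_eq_bar]
  tauto

theorem card_lasso_eq_eq_of_lt_two {n : ℕ} (hn : n < 2) (x : X.V) :
    Nat.card {z : X.E × (Fin (n + 1) → X.E) //
      X.IsLasso x z ∧ z.2 0 = X.bar z.1 ∧ z.2 (Fin.last n) = z.1} = 0 := by
  refine Nat.card_eq_zero.2 (Or.inl ⟨fun ⟨⟨e, q⟩, ⟨_, hq⟩, h0, hl⟩ => ?_⟩)
  dsimp only at h0 hl hq
  interval_cases n
  · exact X.bar_ne e (h0.symm.trans hl)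
  · have := ((isGeodesicLoopAt_iff.1 hq).1 0).2
    simp only [Fin.castSucc_zero, h0, X.bar_bar] at this
    exact this hl

theorem card_lasso_eq_eq_add_two (j : ℕ) (x : X.V) :
    Nat.card {z : X.E × (Fin (j + 3) → X.E) //
      X.IsLasso x z ∧ z.2 0 = X.bar z.1 ∧ z.2 (Fin.last (j + 2)) = z.1} =
    Nat.card {w : X.E × (Fin (j + 1) → X.E) //
      (X.o w.1 = x ∧ X.IsGeodesicLoopAt x w.2) ∧ w.1 ≠ w.2 0 ∧ w.1 ≠ X.bar (w.2 (Fin.last j))} := by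
  have peel : ∀ z : {z : X.E × (Fin (j + 3) → X.E) //
      X.IsLasso x z ∧ z.2 0 = X.bar z.1 ∧ z.2 (Fin.last (j + 2)) = z.1},
      Fin.cons (X.bar z.1.1) (Fin.snoc (Fin.init (Fin.tail z.1.2)) z.1.1) = z.1.2 := by
    intro z
    rw [← z.2.2.1]
    conv_lhs => rw [← z.2.2.2]
    exact Fin.cons_snoc_init_tail _
  refine Nat.card_congr
    { toFun := fun z => ⟨(z.1.1, Fin.init (Fin.tail z.1.2)), ?_⟩
      invFun := fun w => ⟨(w.1.1, Fin.cons (X.bar w.1.1) (Fin.snoc w.1.2 w.1.1)), ?_⟩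
      left_inv := fun z => Subtype.ext (Prod.ext rfl (peel z))
      right_inv := fun w => by simp [Fin.tail_cons, Fin.init_snoc] }
  · obtain ⟨⟨hx, hq⟩, -⟩ := z.2
    rw [← peel z, isGeodesicLoopAt_cons_bar_snoc_iff, hx] at hq
    exact ⟨⟨hx, hq.1⟩, hq.2⟩
  · obtain ⟨⟨hx, hq⟩, hne⟩ := w.2
    refine ⟨⟨hx, ?_⟩, rfl, ?_⟩
    · rw [isGeodesicLoopAt_cons_bar_snoc_iff, hx]
      exact ⟨hq, hne⟩
    · dsimp only
      rw [Fin.cons_snoc_eq_snoc_cons, Fin.snoc_last]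

theorem card_edge_loop (k : ℕ) (x : X.V) :
    Nat.card {w : X.E × (Fin k → X.E) // X.o w.1 = x ∧ X.IsGeodesicLoopAt x w.2} =
      X.deg x * X.c k x := by
  rw [Nat.card_congr (Equiv.subtypeProdEquivProd (p := (X.o · = x))), Nat.card_prod]
  rfl

theorem card_edge_loop_eq_eq (j : ℕ) (x : X.V) :
    Nat.card {w : X.E × (Fin (j + 1) → X.E) // (X.o w.1 = x ∧ X.IsGeodesicLoopAt x w.2) ∧
      w.1 = w.2 0 ∧ w.1 = X.bar (w.2 (Fin.last j))} = X.T (j + 1) x := by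
  refine Nat.card_subtype_eq_of_graph (fun ℓ => ℓ 0) fun w => ?_
  rw [hasTail_iff, isGeodesicLoopAt_iff]
  grind [X.bar_bar]

theorem card_edge_loop_eq_ne (j : ℕ) (x : X.V) :
    Nat.card {w : X.E × (Fin (j + 1) → X.E) // (X.o w.1 = x ∧ X.IsGeodesicLoopAt x w.2) ∧
      w.1 = w.2 0 ∧ w.1 ≠ X.bar (w.2 (Fin.last j))} = X.N (j + 1) x := by
  refine Nat.card_subtype_eq_of_graph (fun ℓ => ℓ 0) fun w => ?_
  rw [hasTail_iff, isGeodesicLoopAt_iff]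
  grind [X.bar_bar]

theorem card_edge_loop_ne_eq (j : ℕ) (x : X.V) :
    Nat.card {w : X.E × (Fin (j + 1) → X.E) // (X.o w.1 = x ∧ X.IsGeodesicLoopAt x w.2) ∧
      w.1 ≠ w.2 0 ∧ w.1 = X.bar (w.2 (Fin.last j))} = X.N (j + 1) x := by
  refine Nat.card_subtype_eq_of_graph (fun ℓ => X.bar (ℓ (Fin.last j))) fun w => ?_
  rw [hasTail_iff, isGeodesicLoopAt_iff]
  grind [X.bar_bar, o_bar_eq_t]

section LocallyFinite

variable [∀ x, Finite (X.edgesAt x)]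

theorem finite_setOf_isGeodesic (n : ℕ) (y : X.V) :
    {q : Fin (n + 1) → X.E | X.IsGeodesic q ∧ X.o (q 0) = y}.Finite := by
  induction n generalizing y with
  | zero =>
    refine ((X.edgesAt y).toFinite.image fun e _ => e).subset ?_
    rintro q ⟨-, hq⟩
    exact ⟨q 0, hq, funext fun i => by rw [Fin.fin_one_eq_zero i]⟩
  | succ n ih =>
    refine (Set.Finite.biUnion (X.edgesAt y).toFinite
      (t := fun e => Fin.cons e '' {q | X.IsGeodesic q ∧ X.o (q 0) = X.t e})
      fun e _ => (ih (X.t e)).image _).subset ?_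
    rintro q ⟨hq, hy⟩
    rw [← Fin.cons_self_tail q, isGeodesic_cons_iff] at hq
    exact Set.mem_biUnion hy ⟨Fin.tail q, ⟨hq.2, hq.1.1.symm⟩, Fin.cons_self_tail q⟩

instance (k : ℕ) (y : X.V) : Finite {q : Fin k → X.E // X.IsGeodesicLoopAt y q} := by
  cases k with
  | zero => exact Finite.of_subsingleton
  | succ n =>
    refine ((X.finite_setOf_isGeodesic n y).subset fun q hq => ?_).to_subtype
    obtain ⟨hg, h0, -⟩ := isGeodesicLoopAt_iff.1 hq
    exact ⟨hg, h0⟩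

theorem c_eq_N_add_T (m : ℕ) (x : X.V) : X.c m x = X.N m x + X.T m x := by
  rw [c, N, T, Nat.card_subtype_eq_card_and_add_card_and_not _ X.HasTail, add_comm]

instance (k : ℕ) (x : X.V) : Finite {z : X.E × (Fin k → X.E) // X.IsLasso x z} :=
  Finite.of_equiv _ (lassoEquivSigma k x).symm

theorem finsum_c_eq_card_lasso (k : ℕ) (x : X.V) :
    ∑ᶠ e ∈ X.edgesAt x, (X.c k (X.t e) : ℤ) =
      Nat.card {z : X.E × (Fin k → X.E) // X.IsLasso x z} := by
  have := Fintype.ofFinite (X.edgesAt x)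
  rw [Nat.card_congr (lassoEquivSigma k x), Nat.card_sigma, ← finsum_set_coe_eq_finsum_mem,
    finsum_eq_sum_of_fintype]
  push_cast
  rfl

instance (k : ℕ) (x : X.V) :
    Finite {w : X.E × (Fin k → X.E) // X.o w.1 = x ∧ X.IsGeodesicLoopAt x w.2} :=
  Finite.of_equiv _
    (Equiv.subtypeProdEquivProd (p := (· ∈ X.edgesAt x)) (q := X.IsGeodesicLoopAt x)).symm

theorem intCast_card_edge_loop_ne_ne (j : ℕ) (x : X.V) :
    (Nat.card {w : X.E × (Fin (j + 1) → X.E) // (X.o w.1 = x ∧ X.IsGeodesicLoopAt x w.2) ∧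
      w.1 ≠ w.2 0 ∧ w.1 ≠ X.bar (w.2 (Fin.last j))} : ℤ) =
      ((X.deg x : ℤ) - 2) * X.c (j + 1) x + X.T (j + 1) x := by
  have hsplit := Nat.card_subtype_eq_four_cases
    (fun w : X.E × (Fin (j + 1) → X.E) => X.o w.1 = x ∧ X.IsGeodesicLoopAt x w.2)
    (fun w => w.1 = w.2 0) (fun w => w.1 = X.bar (w.2 (Fin.last j)))
  simp only [← ne_eq] at hsplit
  rw [card_edge_loop, card_edge_loop_eq_eq, card_edge_loop_eq_ne, card_edge_loop_ne_eq,
    X.c_eq_N_add_T] at hsplit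
  zify at hsplit
  push_cast [X.c_eq_N_add_T]
  linear_combination -hsplit

theorem T_add_three (n : ℕ) (x : X.V) :
    (X.T (n + 3) x : ℤ) = ((X.deg x : ℤ) - 2) * X.c (n + 1) x -
      X.lap (fun v => (X.c (n + 1) v : ℤ)) x + 2 * X.T (n + 1) x -
      Nat.card {z : X.E × (Fin (n + 1) → X.E) //
        X.IsLasso x z ∧ z.2 0 = X.bar z.1 ∧ z.2 (Fin.last n) = z.1} := by
  have hsplit := Nat.card_subtype_eq_four_cases (X.IsLasso x)
    (fun z : X.E × (Fin (n + 1) → X.E) => z.2 0 = X.bar z.1) (fun z => z.2 (Fin.last n) = z.1)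
  simp only [← ne_eq] at hsplit
  rw [card_lasso_ne_eq, card_lasso_eq_ne, card_lasso_ne_ne] at hsplit
  have hc := X.c_eq_N_add_T (n + 1) x
  rw [lap, X.finsum_c_eq_card_lasso, hsplit]
  push_cast [hc]
  ring

theorem T_three (x : X.V) :
    (X.T 3 x : ℤ) = ((X.deg x : ℤ) - 2) * X.c 1 x - X.lap (fun v => (X.c 1 v : ℤ)) x := by
  have := X.T_add_three 0 x
  rw [card_lasso_eq_eq_of_lt_two (by norm_num), T_one] at this
  simpa using this

theorem T_four (x : X.V) :
    (X.T 4 x : ℤ) = ((X.deg x : ℤ) - 2) * X.c 2 x - X.lap (fun v => (X.c 2 v : ℤ)) x := by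
  have := X.T_add_three 1 x
  rw [card_lasso_eq_eq_of_lt_two (by norm_num), T_two] at this
  simpa using this

theorem T_add_five (k : ℕ) (x : X.V) :
    (X.T (k + 5) x : ℤ) = ((X.deg x : ℤ) - 2) * X.c (k + 3) x -
      X.lap (fun v => (X.c (k + 3) v : ℤ)) x + 2 * X.T (k + 3) x -
      (((X.deg x : ℤ) - 2) * X.c (k + 1) x + X.T (k + 1) x) := by
  have := X.T_add_three (k + 2) x
  rwa [card_lasso_eq_eq_add_two, intCast_card_edge_loop_ne_ne] at this

end LocallyFinite

end SerreGraph

theorem N_formula_general (X : SerreGraph)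
    (hfin : ∀ x : X.V, (X.edgesAt x).Finite)
    (x₀ : X.V) (m : ℕ) (hm : 2 < m) :
    (X.N m x₀ : ℤ) =
      (X.c m x₀ : ℤ)
        - ((X.deg x₀ : ℤ) - 2) *
            ∑ i ∈ Finset.Icc 1 ((m + 1) / 2 - 1), (X.c (m - 2 * i) x₀ : ℤ)
        + ∑ i ∈ Finset.Icc 1 ((m + 1) / 2 - 1),
            (i : ℤ) * X.lap (fun x => (X.c (m - 2 * i) x : ℤ)) x₀ := by
  have : ∀ x, Finite (X.edgesAt x) := fun x => (hfin x).to_subtype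
  have hT := eq_sum_Icc_of_recurrence (T := fun k => (X.T k x₀ : ℤ))
    (C := fun k => (X.c k x₀ : ℤ)) (L := fun k => X.lap (fun v => (X.c k v : ℤ)) x₀)
    (by simp [X.T_one]) (by simp [X.T_two]) (X.T_three x₀) (X.T_four x₀) (X.T_add_five · x₀)
    (m := m) (by omega)
  have hc := X.c_eq_N_add_T m x₀
  push_cast [hc] at hT ⊢
  linarith

/-- For `m > 2`:
`N_m(x₀) = c_m(x₀) − (deg(x₀)−2)·Σ_{i=1}^{⌈m/2⌉−1} c_{m−2i}(x₀)
  + Σ_{i=1}^{⌈m/2⌉−1} i·(Δ_X c_{m−2i})(x₀)`.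
In `ℕ` the ceiling `⌈m/2⌉` is `(m+1)/2`. -/
theorem N_formula (X : SerreGraph) [Countable X.V]
    (hconn : X.Connected)
    (hfin : ∀ x : X.V, (X.edgesAt x).Finite)
    (hbd : ∃ M : ℕ, ∀ x : X.V, X.deg x ≤ M)
    (hdeg1 : ∀ x : X.V, X.deg x ≠ 1)
    (x₀ : X.V) (m : ℕ) (hm : 2 < m) :
    (X.N m x₀ : ℤ) =
      (X.c m x₀ : ℤ)
        - ((X.deg x₀ : ℤ) - 2) *
            ∑ i ∈ Finset.Icc 1 ((m + 1) / 2 - 1), (X.c (m - 2 * i) x₀ : ℤ)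
        + ∑ i ∈ Finset.Icc 1 ((m + 1) / 2 - 1),
            (i : ℤ) * X.lap (fun x => (X.c (m - 2 * i) x : ℤ)) x₀ :=
  N_formula_general X hfin x₀ m hm
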